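/- arXiv:2312.16776 — 2 statements merged into one kernel-verified Lean document; each statement's English description precedes it below -/
import Mathlib

section
/- Every √gl_n-crystal B is a gl_n-crystal with respect to the same weight map and the squared operators (e'_i)² and (f'_i)² for i ∈ [n−1] (with the convention e'_i(0) = f'_i(0) = 0), and this gl_n-crystal is seminormal. Likewise, every √q_n-crystal is a q_n-crystal with respect to the squared operators (e'_i)² and (f'_i)² for i ∈ {1̄, 1, 2, …, n−1}. -/
open scoped Classical

/-! ## Shifted diagrams, hook words, decomposition tableaux -/

/-- A strict partition, given as its (strictly decreasing) list of positive parts. -/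
def IsStrictPartition (lam : List ℕ) : Prop :=
  lam.Chain' (· > ·) ∧ ∀ p ∈ lam, 0 < p

/-- A partition (weakly decreasing list of positive parts). -/
def IsPartition (lam : List ℕ) : Prop :=
  lam.Chain' (· ≥ ·) ∧ ∀ p ∈ lam, 0 < p

/-- `(i, j)` (1-indexed row `i`, column `j`) is a box of the shifted diagram `SD_lam`. -/
def InSD (lam : List ℕ) (i j : ℕ) : Prop :=
  1 ≤ i ∧ i ≤ lam.length ∧ i ≤ j ∧ j < i + lam.getD (i - 1) 0

/-- `(i, j)` is a box of the (unshifted) Young diagram of `lam`. -/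
def InYD (lam : List ℕ) (i j : ℕ) : Prop :=
  1 ≤ i ∧ i ≤ lam.length ∧ 1 ≤ j ∧ j ≤ lam.getD (i - 1) 0

/-- The word given by row `i` (1-indexed) of a shifted tableau `T`, read left to right. -/
def rowWord (lam : List ℕ) (T : ℕ × ℕ → ℕ) (i : ℕ) : List ℕ :=
  (List.range (lam.getD (i - 1) 0)).map fun j => T (i, i + j)

/-- A hook word: a sequence of positive integers `w₁ ≥ ⋯ ≥ w_m < w_{m+1} < ⋯ < w_n`
for some `m ∈ [n]`. -/
def IsHookWord (w : List ℕ) : Prop :=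
  (∀ v ∈ w, 0 < v) ∧
  ∃ m, 1 ≤ m ∧ m ≤ w.length ∧
    (∀ j : ℕ, j + 1 < m → w.getD (j + 1) 0 ≤ w.getD j 0) ∧
    (∀ j : ℕ, m ≤ j + 1 → j + 1 < w.length → w.getD j 0 < w.getD (j + 1) 0)

/-- `r` is a hook subword of maximal length in `s`. -/
def IsMaxHookSubwordIn (r s : List ℕ) : Prop :=
  r.Sublist s ∧ IsHookWord r ∧
    ∀ t : List ℕ, t.Sublist s → IsHookWord t → t.length ≤ r.length

/-- A (semistandard) decomposition tableau of shifted shape `lam`. -/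
def IsDecompTab (lam : List ℕ) (T : ℕ × ℕ → ℕ) : Prop :=
  (∀ i, 1 ≤ i → i ≤ lam.length → IsHookWord (rowWord lam T i)) ∧
  (∀ i, 1 ≤ i → i + 1 ≤ lam.length →
    IsMaxHookSubwordIn (rowWord lam T i) (rowWord lam T (i + 1) ++ rowWord lam T i))

/-! ## Set-valued decomposition tableaux -/

/-- A set-valued decomposition tableau: boxes of `SD_lam` are filled by finite nonempty
sets of positive integers, all of whose distributions are decomposition tableaux. -/
def IsSetDecompTab (lam : List ℕ) (T : ℕ × ℕ → Finset ℕ) : Prop :=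
  (∀ i j, InSD lam i j → (T (i, j)).Nonempty ∧ 0 ∉ T (i, j)) ∧
  (∀ d : ℕ × ℕ → ℕ, (∀ i j, InSD lam i j → d (i, j) ∈ T (i, j)) → IsDecompTab lam d)

/-- Set-valued decomposition tableau whose every entry is contained in `{1, …, n}`. -/
def IsSetDecompTabN (n : ℕ) (lam : List ℕ) (T : ℕ × ℕ → Finset ℕ) : Prop :=
  IsSetDecompTab lam T ∧ ∀ i j, InSD lam i j → ∀ v ∈ T (i, j), v ≤ n

/-! ## Reverse row reading words -/

/-- The boxes of `SD_lam` in reverse row reading order: the first row read right to left,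
then the second row right to left, and so on. -/
def revrowBoxes (lam : List ℕ) : List (ℕ × ℕ) :=
  (List.range lam.length).flatMap fun r =>
    (List.range (lam.getD r 0)).reverse.map fun j => (r + 1, r + 1 + j)

/-- Position of a box in the reverse row reading order. -/
def boxIdx (lam : List ℕ) (b : ℕ × ℕ) : ℕ := (revrowBoxes lam).idxOf b

/-- The reverse row reading word of a set-valued tableau, with each letter labelled by
its box: entries within each box are listed in decreasing order. -/
def revrowEntries (lam : List ℕ) (T : ℕ × ℕ → Finset ℕ) : List ((ℕ × ℕ) × ℕ) :=
  (revrowBoxes lam).flatMap fun b => (((T b).sort (· ≤ ·)).reverse).map fun v => (b, v)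

/-- The reverse row reading word of a set-valued tableau. -/
def revrowWord (lam : List ℕ) (T : ℕ × ℕ → Finset ℕ) : List ℕ :=
  (revrowEntries lam T).map Prod.snd

/-- `wtSet lam T k` is the number of boxes of `T` whose entry contains `k`. -/
noncomputable def wtSet (lam : List ℕ) (T : ℕ × ℕ → Finset ℕ) (k : ℕ) : ℕ :=
  ((revrowBoxes lam).filter fun b => decide (k ∈ T b)).length

/-- `wtNum lam T k` is the number of boxes of an ordinary tableau `T` equal to `k`. -/
noncomputable def wtNum (lam : List ℕ) (T : ℕ × ℕ → ℕ) (k : ℕ) : ℕ :=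
  ((revrowBoxes lam).filter fun b => decide (T b = k)).length

/-! ## Parenthesis pairing: `i`-unpaired letters -/

/-- Number of unmatched `i+1`'s ( "(" ) after scanning `u` left to right,
where each `i` ( ")" ) cancels the most recent unmatched `i+1`. -/
def openCount (i : ℕ) (u : List ℕ) : ℕ :=
  u.foldl (fun acc a => if a = i + 1 then acc + 1 else if a = i then acc - 1 else acc) 0

/-- Number of unmatched `i`'s ( ")" ) after scanning `u` right to left,
where each `i+1` ( "(" ) cancels the nearest unmatched `i` to its right. -/
def closeCount (i : ℕ) (u : List ℕ) : ℕ :=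
  u.foldr (fun a acc => if a = i then acc + 1 else if a = i + 1 then acc - 1 else acc) 0

/-- Position `p` of `w` holds an `i`-unpaired letter equal to `i+1`. -/
def UnpairedHigh (i : ℕ) (w : List ℕ) (p : ℕ) : Prop :=
  p < w.length ∧ w.getD p 0 = i + 1 ∧ closeCount i (w.drop (p + 1)) = 0

/-- Position `p` of `w` holds an `i`-unpaired letter equal to `i`. -/
def UnpairedLow (i : ℕ) (w : List ℕ) (p : ℕ) : Prop :=
  p < w.length ∧ w.getD p 0 = i ∧ openCount i (w.take p) = 0

instance (i : ℕ) (w : List ℕ) (p : ℕ) : Decidable (UnpairedHigh i w p) := by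
  unfold UnpairedHigh; infer_instance

instance (i : ℕ) (w : List ℕ) (p : ℕ) : Decidable (UnpairedLow i w p) := by
  unfold UnpairedLow; infer_instance

/-- The number of `i`-unpaired letters equal to `i+1` in `w`. -/
def numUnpairedHigh (i : ℕ) (w : List ℕ) : ℕ :=
  ((List.range w.length).filter fun p => decide (UnpairedHigh i w p)).length

/-- The number of `i`-unpaired letters equal to `i` in `w`. -/
def numUnpairedLow (i : ℕ) (w : List ℕ) : ℕ :=
  ((List.range w.length).filter fun p => decide (UnpairedLow i w p)).length

/-! ## Iterated partial operators and string lengths -/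

/-- Iterate a partial operator, with the convention that `0` (i.e. `none`) is absorbing. -/
def iterOpt {α : Type*} (g : α → Option α) : ℕ → α → Option α
  | 0, a => some a
  | k + 1, a => (g a).bind (iterOpt g k)

/-- `m` is the exact string length `sup {k | g^k a ≠ 0}` of `a` under `g`. -/
def HasStringLen {α : Type*} (g : α → Option α) (a : α) (m : ℕ) : Prop :=
  iterOpt g m a ≠ none ∧ iterOpt g (m + 1) a = none

/-! ## The queer crystal operators on set-valued decomposition tableaux -/

/-- The raising crystal operator `e_i` on set-valued decomposition tableaux. -/
noncomputable def eCrystal (lam : List ℕ) (i : ℕ) (T : ℕ × ℕ → Finset ℕ) :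
    Option (ℕ × ℕ → Finset ℕ) :=
  if h : ∃ p, UnpairedHigh i (revrowWord lam T) p then
    let xy := ((revrowEntries lam T).getD (Nat.find h) ((0, 0), 0)).1
    let T1 := Function.update T xy (insert i ((T xy).erase (i + 1)))
    if IsSetDecompTab lam T1 then some T1
    else if _hab : ∃ m, m < boxIdx lam xy ∧ i ∈ T ((revrowBoxes lam).getD m (0, 0)) ∧
        i + 1 ∈ T ((revrowBoxes lam).getD m (0, 0)) then
      let m := Nat.findGreatest (fun m => m < boxIdx lam xy ∧
          i ∈ T ((revrowBoxes lam).getD m (0, 0)) ∧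
          i + 1 ∈ T ((revrowBoxes lam).getD m (0, 0))) (boxIdx lam xy)
      let ab := (revrowBoxes lam).getD m (0, 0)
      some (Function.update (Function.update T ab ((T ab).erase (i + 1))) xy
        (insert i (T xy)))
    else none
  else none

/-- The lowering crystal operator `f_i` on set-valued decomposition tableaux. -/
noncomputable def fCrystal (lam : List ℕ) (i : ℕ) (T : ℕ × ℕ → Finset ℕ) :
    Option (ℕ × ℕ → Finset ℕ) :=
  if _h : ∃ p, UnpairedLow i (revrowWord lam T) p then
    let p := Nat.findGreatest (fun p => UnpairedLow i (revrowWord lam T) p)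
      (revrowWord lam T).length
    let xy := ((revrowEntries lam T).getD p ((0, 0), 0)).1
    let T1 := Function.update T xy (insert (i + 1) ((T xy).erase i))
    if IsSetDecompTab lam T1 then some T1
    else if hab : ∃ m, boxIdx lam xy < m ∧ m < (revrowBoxes lam).length ∧
        i ∈ T ((revrowBoxes lam).getD m (0, 0)) ∧
        i + 1 ∈ T ((revrowBoxes lam).getD m (0, 0)) then
      let ab := (revrowBoxes lam).getD (Nat.find hab) (0, 0)
      some (Function.update (Function.update T ab ((T ab).erase i)) xy
        (insert (i + 1) (T xy)))
    else none
  else none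

/-- The queer raising operator `e_1̄` on set-valued decomposition tableaux. -/
noncomputable def eBarCrystal (lam : List ℕ) (T : ℕ × ℕ → Finset ℕ) :
    Option (ℕ × ℕ → Finset ℕ) :=
  if h : ∃ p, p < (revrowWord lam T).length ∧ (revrowWord lam T).getD p 0 = 2 ∧
      ∀ q < p, (revrowWord lam T).getD q 0 ≠ 1 then
    let xy := ((revrowEntries lam T).getD (Nat.find h) ((0, 0), 0)).1
    if 1 ∈ T xy then none
    else some (Function.update T xy (insert 1 ((T xy).erase 2)))
  else none

/-- The queer lowering operator `f_1̄` on set-valued decomposition tableaux. -/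
noncomputable def fBarCrystal (lam : List ℕ) (T : ℕ × ℕ → Finset ℕ) :
    Option (ℕ × ℕ → Finset ℕ) :=
  if h : ∃ p, p < (revrowWord lam T).length ∧ (revrowWord lam T).getD p 0 = 1 ∧
      ∀ q < p, (revrowWord lam T).getD q 0 ≠ 2 then
    let xy := ((revrowEntries lam T).getD (Nat.find h) ((0, 0), 0)).1
    some (Function.update T xy (insert 2 ((T xy).erase 1)))
  else none
/-! ## Multiset-valued decomposition tableaux -/

/-- A multiset-valued decomposition tableau in which only the entry `1` may repeat
within a box, all of whose distributions are decomposition tableaux. -/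
def IsMultisetDecompTab (lam : List ℕ) (T : ℕ × ℕ → Multiset ℕ) : Prop :=
  (∀ i j, InSD lam i j → T (i, j) ≠ 0 ∧ 0 ∉ T (i, j) ∧
      ∀ v : ℕ, v ≠ 1 → (T (i, j)).count v ≤ 1) ∧
  (∀ d : ℕ × ℕ → ℕ, (∀ i j, InSD lam i j → d (i, j) ∈ T (i, j)) → IsDecompTab lam d)

/-- Reverse row reading word of a multiset-valued tableau, with boxes recorded. -/
def revrowEntriesM (lam : List ℕ) (T : ℕ × ℕ → Multiset ℕ) : List ((ℕ × ℕ) × ℕ) :=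
  (revrowBoxes lam).flatMap fun b => (((T b).sort (· ≤ ·)).reverse).map fun v => (b, v)

/-- Reverse row reading word of a multiset-valued tableau. -/
def revrowWordM (lam : List ℕ) (T : ℕ × ℕ → Multiset ℕ) : List ℕ :=
  (revrowEntriesM lam T).map Prod.snd

/-- The operator `e*_1̄` on multiset-valued decomposition tableaux: if the first `2` of
the reverse row reading word occurs before every `1`, change it to a `1`. -/
noncomputable def eStarBar (lam : List ℕ) (T : ℕ × ℕ → Multiset ℕ) :
    Option (ℕ × ℕ → Multiset ℕ) :=
  if h : ∃ p, p < (revrowWordM lam T).length ∧ (revrowWordM lam T).getD p 0 = 2 ∧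
      ∀ q < p, (revrowWordM lam T).getD q 0 ≠ 1 then
    let b := ((revrowEntriesM lam T).getD (Nat.find h) ((0, 0), 0)).1
    some (Function.update T b (1 ::ₘ (T b).erase 2))
  else none

/-- The operator `f*_1̄` on multiset-valued decomposition tableaux: if the first `1` of
the reverse row reading word occurs before every `2`, change it to a `2`. -/
noncomputable def fStarBar (lam : List ℕ) (T : ℕ × ℕ → Multiset ℕ) :
    Option (ℕ × ℕ → Multiset ℕ) :=
  if h : ∃ p, p < (revrowWordM lam T).length ∧ (revrowWordM lam T).getD p 0 = 1 ∧
      ∀ q < p, (revrowWordM lam T).getD q 0 ≠ 2 then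
    let b := ((revrowEntriesM lam T).getD (Nat.find h) ((0, 0), 0)).1
    some (Function.update T b (2 ::ₘ (T b).erase 1))
  else none

/-! ## Linked `i`-words and square-root crystal operators -/

/-- Characters of a linked `i`-word: `(`, `)` and `-`. -/
inductive PChar : Type
  | op : PChar
  | cl : PChar
  | dash : PChar
  deriving DecidableEq

/-- The linked `i`-word of a set-valued tableau, with each character labelled by its box:
a box containing `i` but not `i+1` gives `)`, a box containing `i+1` but not `i` gives `(`,
and a box containing both gives `)-(`; boxes are read in reverse row reading order. -/
def tokens (lam : List ℕ) (i : ℕ) (T : ℕ × ℕ → Finset ℕ) : List (PChar × (ℕ × ℕ)) :=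
  (revrowBoxes lam).flatMap fun b =>
    if i ∈ T b ∧ i + 1 ∈ T b then [(PChar.cl, b), (PChar.dash, b), (PChar.op, b)]
    else if i ∈ T b then [(PChar.cl, b)]
    else if i + 1 ∈ T b then [(PChar.op, b)]
    else []

/-- Unmatched `(`s after scanning left to right (ignoring dashes). -/
def openCnt (u : List PChar) : ℕ :=
  u.foldl (fun acc a => match a with
    | PChar.op => acc + 1
    | PChar.cl => acc - 1
    | PChar.dash => acc) 0

/-- Unmatched `)`s after scanning right to left (ignoring dashes). -/
def closeCnt (u : List PChar) : ℕ :=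
  u.foldr (fun a acc => match a with
    | PChar.cl => acc + 1
    | PChar.op => acc - 1
    | PChar.dash => acc) 0

/-- Position `p` holds an unpaired `(`. -/
def UnpairedOp (ws : List PChar) (p : ℕ) : Prop :=
  p < ws.length ∧ ws.getD p PChar.dash = PChar.op ∧ closeCnt (ws.drop (p + 1)) = 0

/-- Position `p` holds an unpaired `)`. -/
def UnpairedCl (ws : List PChar) (p : ℕ) : Prop :=
  p < ws.length ∧ ws.getD p PChar.dash = PChar.cl ∧ openCnt (ws.take p) = 0

/-- A fully matched (balanced) parenthesis word, ignoring dashes. -/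
def BalancedP (u : List PChar) : Prop :=
  u.count PChar.op = u.count PChar.cl ∧
  ∀ k, (u.take k).count PChar.cl ≤ (u.take k).count PChar.op

/-- The `(` at position `a` is matched with the `)` at position `b`. -/
def MatchedPair (ws : List PChar) (a b : ℕ) : Prop :=
  a < b ∧ b < ws.length ∧ ws.getD a PChar.dash = PChar.op ∧
  ws.getD b PChar.dash = PChar.cl ∧ BalancedP ((ws.drop (a + 1)).take (b - (a + 1)))

/-- Generating relation for equivalence classes of characters: a matched pair together
with everything between them lies in one class, and so do the three characters `)-(`
coming from a single box. -/
def LinkRel (ws : List PChar) (p q : ℕ) : Prop :=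
  (∃ a b, MatchedPair ws a b ∧ a ≤ p ∧ p ≤ b ∧ a ≤ q ∧ q ≤ b) ∨
  (∃ d, 1 ≤ d ∧ d + 1 < ws.length ∧ ws.getD d PChar.op = PChar.dash ∧
    (p = d - 1 ∨ p = d ∨ p = d + 1) ∧ (q = d - 1 ∨ q = d ∨ q = d + 1))

/-- Two positions lie in the same equivalence class of the linked `i`-word. -/
def SameClass (ws : List PChar) : ℕ → ℕ → Prop := Relation.ReflTransGen (LinkRel ws)

/-- The class of position `p` contains an unpaired `(`. -/
def HasUnpairedOpIn (ws : List PChar) (p : ℕ) : Prop :=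
  ∃ q, SameClass ws p q ∧ UnpairedOp ws q

/-- The class of position `p` contains an unpaired `)`. -/
def HasUnpairedClIn (ws : List PChar) (p : ℕ) : Prop :=
  ∃ q, SameClass ws p q ∧ UnpairedCl ws q

/-- Position `p` belongs to a left form: a class with no unpaired `)` that ends
with an unpaired `(`. -/
def IsLeftFormAt (ws : List PChar) (p : ℕ) : Prop :=
  p < ws.length ∧ HasUnpairedOpIn ws p ∧ ¬ HasUnpairedClIn ws p

/-- Position `p` belongs to a right form: a class with no unpaired `(` that starts
with an unpaired `)`. -/
def IsRightFormAt (ws : List PChar) (p : ℕ) : Prop :=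
  p < ws.length ∧ HasUnpairedClIn ws p ∧ ¬ HasUnpairedOpIn ws p

/-- The square-root raising operator `e'_i` on set-valued decomposition tableaux. -/
noncomputable def eSqrt (lam : List ℕ) (i : ℕ) (T : ℕ × ℕ → Finset ℕ) :
    Option (ℕ × ℕ → Finset ℕ) :=
  let tk := tokens lam i T
  let ws := tk.map Prod.fst
  if hc : ∃ p, UnpairedOp ws p ∧ HasUnpairedClIn ws p then
    -- the `)-(` at the end of the combined form: remove `i+1` from its box
    let b := (tk.getD (Nat.find hc) (PChar.op, (0, 0))).2
    some (Function.update T b ((T b).erase (i + 1)))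
  else if hl : ∃ p, IsLeftFormAt ws p then
    -- the `(` at the start of the first left form: add `i` to its box
    let b := (tk.getD (Nat.find hl) (PChar.op, (0, 0))).2
    some (Function.update T b (insert i (T b)))
  else none

/-- The square-root lowering operator `f'_i` on set-valued decomposition tableaux. -/
noncomputable def fSqrt (lam : List ℕ) (i : ℕ) (T : ℕ × ℕ → Finset ℕ) :
    Option (ℕ × ℕ → Finset ℕ) :=
  let tk := tokens lam i T
  let ws := tk.map Prod.fst
  if hc : ∃ p, UnpairedCl ws p ∧ HasUnpairedOpIn ws p then
    -- the `)-(` at the beginning of the combined form: remove `i` from its box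
    let b := (tk.getD (Nat.find hc) (PChar.op, (0, 0))).2
    some (Function.update T b ((T b).erase i))
  else if _hr : ∃ p, IsRightFormAt ws p then
    -- the `)` at the end of the last right form: add `i+1` to its box
    let b := (tk.getD (Nat.findGreatest (fun p => IsRightFormAt ws p) ws.length)
        (PChar.op, (0, 0))).2
    some (Function.update T b (insert (i + 1) (T b)))
  else none

/-- The square-root queer raising operator `e'_1̄`. -/
noncomputable def eBarSqrt (lam : List ℕ) (T : ℕ × ℕ → Finset ℕ) :
    Option (ℕ × ℕ → Finset ℕ) :=
  if h : ∃ m, m < (revrowBoxes lam).length ∧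
      (1 ∈ T ((revrowBoxes lam).getD m (0, 0)) ∨ 2 ∈ T ((revrowBoxes lam).getD m (0, 0))) then
    let b := (revrowBoxes lam).getD (Nat.find h) (0, 0)
    if 1 ∈ T b then
      if 2 ∈ T b then some (Function.update T b ((T b).erase 2)) else none
    else some (Function.update T b (insert 1 (T b)))
  else none

/-- The square-root queer lowering operator `f'_1̄`. -/
noncomputable def fBarSqrt (lam : List ℕ) (T : ℕ × ℕ → Finset ℕ) :
    Option (ℕ × ℕ → Finset ℕ) :=
  if h : ∃ m, m < (revrowBoxes lam).length ∧
      (1 ∈ T ((revrowBoxes lam).getD m (0, 0)) ∨ 2 ∈ T ((revrowBoxes lam).getD m (0, 0))) then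
    let b := (revrowBoxes lam).getD (Nat.find h) (0, 0)
    if 2 ∈ T b then
      if 1 ∈ T b then some (Function.update T b ((T b).erase 1)) else none
    else some (Function.update T b (insert 2 (T b)))
  else none
/-! ## Abstract √gl_n- and √q_n-crystals -/

/-- The data of a crystal-like structure: a weight map (coordinates `1, …, n` are the
relevant ones) and partial raising/lowering operators indexed by `i ∈ [n-1]`. -/
structure SqGlData (B : Type*) where
  wt : B → ℕ → ℕ
  e : ℕ → B → Option B
  f : ℕ → B → Option B

/-- The axioms of a `√gl_n`-crystal. -/
def IsSqGlCrystal {B : Type*} (n : ℕ) (D : SqGlData B) : Prop :=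
  (∀ i, 1 ≤ i → i < n → ∀ b, ∃ ep ph : ℕ,
      HasStringLen (D.e i) b ep ∧ HasStringLen (D.f i) b ph ∧
      Even (ep + ph) ∧ (ph : ℤ) - ep = 2 * ((D.wt b i : ℤ) - D.wt b (i + 1))) ∧
  (∀ i, 1 ≤ i → i < n → ∀ b c, D.e i b = some c ↔ D.f i c = some b) ∧
  (∀ i, 1 ≤ i → i < n → ∀ b c, D.e i b = some c → ∀ ep, HasStringLen (D.e i) b ep →
      ∀ k, (D.wt c k : ℤ) - D.wt b k =
        if Even ep then (if k = i then 1 else 0) else (if k = i + 1 then -1 else 0))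

/-- The data of a queer crystal-like structure. -/
structure SqQData (B : Type*) extends SqGlData B where
  ebar : B → Option B
  fbar : B → Option B

/-- The axioms of a `√q_n`-crystal. -/
def IsSqQnCrystal {B : Type*} (n : ℕ) (D : SqQData B) : Prop :=
  IsSqGlCrystal n D.toSqGlData ∧
  (∀ i, 3 ≤ i → i < n → ∀ b,
      (D.e i b).bind D.ebar = (D.ebar b).bind (D.e i) ∧
      (D.f i b).bind D.ebar = (D.ebar b).bind (D.f i) ∧
      (D.e i b).bind D.fbar = (D.fbar b).bind (D.e i) ∧
      (D.f i b).bind D.fbar = (D.fbar b).bind (D.f i)) ∧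
  (∀ i, 3 ≤ i → i < n → ∀ b c, (D.ebar b = some c ∨ D.fbar b = some c) →
      (∀ m, HasStringLen (D.e i) b m ↔ HasStringLen (D.e i) c m) ∧
      (∀ m, HasStringLen (D.f i) b m ↔ HasStringLen (D.f i) c m)) ∧
  (∀ b, ∃ ep ph : ℕ, HasStringLen D.ebar b ep ∧ HasStringLen D.fbar b ph ∧
      ep + ph = (if D.wt b 1 = 0 ∧ D.wt b 2 = 0 then 0 else 2)) ∧
  (∀ b c, D.ebar b = some c ↔ D.fbar c = some b) ∧
  (∀ b c, D.ebar b = some c → ∀ ep, HasStringLen D.ebar b ep →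
      ∀ k, (D.wt c k : ℤ) - D.wt b k =
        if ep = 2 then (if k = 1 then 1 else 0) else (if k = 2 then -1 else 0))

/-- The square of a partial operator. -/
def sqOp {B : Type*} (g : B → Option B) : B → Option B := fun b => (g b).bind g

/-- The axioms of a (seminormal) `gl_n`-crystal for given weight map and operators. -/
def GlSeminormalAxioms {B : Type*} (n : ℕ) (wt : B → ℕ → ℕ)
    (E F : ℕ → B → Option B) : Prop :=
  (∀ i, 1 ≤ i → i < n → ∀ b c, E i b = some c ↔ F i c = some b) ∧
  (∀ i, 1 ≤ i → i < n → ∀ b c, E i b = some c →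
      ∀ k, (wt c k : ℤ) - wt b k = (if k = i then 1 else 0) - (if k = i + 1 then 1 else 0)) ∧
  (∀ i, 1 ≤ i → i < n → ∀ b, ∃ ep ph : ℕ,
      HasStringLen (E i) b ep ∧ HasStringLen (F i) b ph ∧
      (ph : ℤ) - ep = (wt b i : ℤ) - wt b (i + 1))

/-- The additional axioms making a `gl_n`-crystal into a `q_n`-crystal. -/
def QnExtraAxioms {B : Type*} (n : ℕ) (wt : B → ℕ → ℕ)
    (E F : ℕ → B → Option B) (Eb Fb : B → Option B) : Prop :=
  (∀ i, 3 ≤ i → i < n → ∀ b,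
      (E i b).bind Eb = (Eb b).bind (E i) ∧ (F i b).bind Eb = (Eb b).bind (F i) ∧
      (E i b).bind Fb = (Fb b).bind (E i) ∧ (F i b).bind Fb = (Fb b).bind (F i)) ∧
  (∀ i, 3 ≤ i → i < n → ∀ b c, (Eb b = some c ∨ Fb b = some c) →
      (∀ m, HasStringLen (E i) b m ↔ HasStringLen (E i) c m) ∧
      (∀ m, HasStringLen (F i) b m ↔ HasStringLen (F i) c m)) ∧
  (∀ b c, Eb b = some c ↔ Fb c = some b) ∧
  (∀ b c, Eb b = some c →
      ∀ k, (wt c k : ℤ) - wt b k = (if k = 1 then 1 else 0) - (if k = 2 then 1 else 0))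

/-- String length as a function (the supremum of the set of iterates that survive). -/
noncomputable def strLen {B : Type*} (g : B → Option B) (b : B) : ℕ :=
  sSup {k | iterOpt g k b ≠ none}

/-- Tensor product of `√gl_n`-crystal data. -/
noncomputable def tensorGl {B C : Type*} (DB : SqGlData B) (DC : SqGlData C) :
    SqGlData (B × C) where
  wt := fun bc k => DB.wt bc.1 k + DC.wt bc.2 k
  e := fun i bc =>
    if strLen (DB.e i) bc.1 ≤ strLen (DC.f i) bc.2 then
      (DC.e i bc.2).map fun c' => (bc.1, c')
    else (DB.e i bc.1).map fun b' => (b', bc.2)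
  f := fun i bc =>
    if strLen (DB.e i) bc.1 < strLen (DC.f i) bc.2 then
      (DC.f i bc.2).map fun c' => (bc.1, c')
    else (DB.f i bc.1).map fun b' => (b', bc.2)

/-- Tensor product of `√q_n`-crystal data. -/
noncomputable def tensorQ {B C : Type*} (DB : SqQData B) (DC : SqQData C) :
    SqQData (B × C) where
  toSqGlData := tensorGl DB.toSqGlData DC.toSqGlData
  ebar := fun bc =>
    if DB.wt bc.1 1 = 0 ∧ DB.wt bc.1 2 = 0 then (DC.ebar bc.2).map fun c' => (bc.1, c')
    else (DB.ebar bc.1).map fun b' => (b', bc.2)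
  fbar := fun bc =>
    if DB.wt bc.1 1 = 0 ∧ DB.wt bc.1 2 = 0 then (DC.fbar bc.2).map fun c' => (bc.1, c')
    else (DB.fbar bc.1).map fun b' => (b', bc.2)
/-! ## Generating functions -/

/-- A set-valued decomposition tableau, normalized to be empty off the shifted diagram. -/
def IsNormalizedSVDT (lam : List ℕ) (T : ℕ × ℕ → Finset ℕ) : Prop :=
  IsSetDecompTab lam T ∧ ∀ i j, ¬ InSD lam i j → T (i, j) = ∅

/-- A decomposition tableau, normalized to be `0` off the shifted diagram. -/
def IsNormalizedDT (lam : List ℕ) (T : ℕ × ℕ → ℕ) : Prop :=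
  IsDecompTab lam T ∧ ∀ i j, ¬ InSD lam i j → T (i, j) = 0

/-- `Σ_λ = ∑_{T ∈ SetDecTab(λ)} x^T` as a formal power series; variable `k` stands for
`x_{k+1}`, i.e. records occurrences of the letter `k+1`. -/
noncomputable def SigmaLam (lam : List ℕ) : MvPowerSeries ℕ ℤ :=
  fun d => (Set.ncard
    {T : ℕ × ℕ → Finset ℕ | IsNormalizedSVDT lam T ∧ ∀ k, wtSet lam T (k + 1) = d k} : ℤ)

/-- The Schur `P`-function `P_λ = ∑_{T ∈ DecTab(λ)} x^T` as a formal power series. -/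
noncomputable def SchurPfun (lam : List ℕ) : MvPowerSeries ℕ ℤ :=
  fun d => (Set.ncard
    {T : ℕ × ℕ → ℕ | IsNormalizedDT lam T ∧ ∀ k, wtNum lam T (k + 1) = d k} : ℤ)

/-! ## Marked (primed) shifted tableaux and `GP`-functions.
We encode the marked alphabet `1' < 1 < 2' < 2 < ⋯` into `ℕ` by `k' ↦ 2k - 1` and
`k ↦ 2k`, so primed letters are odd and the natural order is preserved. -/

/-- A semistandard marked shifted tableau (as a distribution): weakly increasing rows and
columns, no primed (odd) letter repeated in a row, no unprimed (even) letter repeated in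
a column. -/
def IsSemistandardMarked (lam : List ℕ) (d : ℕ × ℕ → ℕ) : Prop :=
  (∀ i j, InSD lam i j → InSD lam i (j + 1) → d (i, j) ≤ d (i, j + 1)) ∧
  (∀ i j, InSD lam i j → InSD lam (i + 1) j → d (i, j) ≤ d (i + 1, j)) ∧
  (∀ i j j', InSD lam i j → InSD lam i j' → j < j' → d (i, j) = d (i, j') →
    Even (d (i, j))) ∧
  (∀ i i' j, InSD lam i j → InSD lam i' j → i < i' → d (i, j) = d (i', j) →
    Odd (d (i, j)))

/-- A semistandard set-valued shifted tableau in the marked alphabet, with no primed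
letters on the main diagonal. -/
def IsSetSSMarkedShifted (lam : List ℕ) (T : ℕ × ℕ → Finset ℕ) : Prop :=
  (∀ i j, InSD lam i j → (T (i, j)).Nonempty ∧ ∀ v ∈ T (i, j), 1 ≤ v) ∧
  (∀ i, InSD lam i i → ∀ v ∈ T (i, i), Even v) ∧
  (∀ d : ℕ × ℕ → ℕ, (∀ i j, InSD lam i j → d (i, j) ∈ T (i, j)) →
    IsSemistandardMarked lam d)

/-- `wtMarked lam T k` is the total number of occurrences of `k` or `k'` in `T`. -/
noncomputable def wtMarked (lam : List ℕ) (T : ℕ × ℕ → Finset ℕ) (k : ℕ) : ℕ :=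
  ((revrowBoxes lam).map fun b =>
    ((T b).filter fun v => v = 2 * k - 1 ∨ v = 2 * k).card).sum

/-- The K-theoretic Schur `P`-function `GP_λ` as a formal power series; variable `k`
stands for `x_{k+1}`. -/
noncomputable def GPfun (lam : List ℕ) : MvPowerSeries ℕ ℤ :=
  fun d => (Set.ncard
    {T : ℕ × ℕ → Finset ℕ | IsSetSSMarkedShifted lam T ∧
      (∀ i j, ¬ InSD lam i j → T (i, j) = ∅) ∧
      ∀ k, wtMarked lam T (k + 1) = d k} : ℤ)

/-! ## Polynomial versions (variables `x_1, …, x_n`, i.e. `X 1, …, X n`) -/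

/-- The boxes of the (unshifted) Young diagram of `lam`, listed row by row. -/
def YDboxes (lam : List ℕ) : List (ℕ × ℕ) :=
  (List.range lam.length).flatMap fun r =>
    (List.range (lam.getD r 0)).map fun j => (r + 1, j + 1)

/-- A semistandard (unshifted) Young tableau: rows weakly increase, columns strictly
increase. -/
def IsSemistandardYT (lam : List ℕ) (d : ℕ × ℕ → ℕ) : Prop :=
  (∀ i j, InYD lam i j → InYD lam i (j + 1) → d (i, j) ≤ d (i, j + 1)) ∧
  (∀ i j, InYD lam i j → InYD lam (i + 1) j → d (i, j) < d (i + 1, j))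

/-- A semistandard set-valued (unshifted) tableau with entries in `{1, …, n}`,
normalized off the diagram. -/
def IsSetSSYT (n : ℕ) (lam : List ℕ) (T : ℕ × ℕ → Finset ℕ) : Prop :=
  (∀ i j, InYD lam i j → (T (i, j)).Nonempty ∧ ∀ v ∈ T (i, j), 1 ≤ v ∧ v ≤ n) ∧
  (∀ i j, ¬ InYD lam i j → T (i, j) = ∅) ∧
  (∀ d : ℕ × ℕ → ℕ, (∀ i j, InYD lam i j → d (i, j) ∈ T (i, j)) → IsSemistandardYT lam d)

/-- The symmetric Grothendieck polynomial `G_λ(x_1, …, x_n)`. -/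
noncomputable def Gpoly (n : ℕ) (lam : List ℕ) : MvPolynomial ℕ ℤ :=
  ∑ᶠ T ∈ {T : ℕ × ℕ → Finset ℕ | IsSetSSYT n lam T},
    ((YDboxes lam).map fun b =>
      ∏ v ∈ T b, (MvPolynomial.X v : MvPolynomial ℕ ℤ)).prod

/-- A semistandard set-valued marked shifted tableau with letters at most `n`,
normalized off the diagram. -/
def IsSetSSMarkedShiftedN (n : ℕ) (lam : List ℕ) (T : ℕ × ℕ → Finset ℕ) : Prop :=
  IsSetSSMarkedShifted lam T ∧ (∀ i j, ¬ InSD lam i j → T (i, j) = ∅) ∧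
  ∀ i j, InSD lam i j → ∀ v ∈ T (i, j), v ≤ 2 * n

/-- The K-theoretic Schur `P`-polynomial `GP_λ(x_1, …, x_n)`. -/
noncomputable def GPpoly (n : ℕ) (lam : List ℕ) : MvPolynomial ℕ ℤ :=
  ∑ᶠ T ∈ {T : ℕ × ℕ → Finset ℕ | IsSetSSMarkedShiftedN n lam T},
    ((revrowBoxes lam).map fun b =>
      ∏ v ∈ T b, (MvPolynomial.X ((v + 1) / 2) : MvPolynomial ℕ ℤ)).prod

/-- The character of the `m`-th tensor power of the standard `√q_n`-crystal, whose
elements are the nonempty subsets of `{1, …, n}` with weight the indicator vector. -/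
noncomputable def standardChar (n m : ℕ) : MvPolynomial ℕ ℤ :=
  ∑ b : Fin m → {S : Finset (Fin n) // S.Nonempty},
    ∏ j : Fin m, ∏ k ∈ (b j).1, (MvPolynomial.X ((k : ℕ) + 1) : MvPolynomial ℕ ℤ)


/-! Since `ε'_i + φ'_i` is even, squaring an operator halves its string lengths exactly, so
`φ - ε` for the squares is half of `φ' - ε'`. Along an `e'_i`-string the parity of `ε'_i`
alternates, hence the two steps of `(e'_i)²` shift the weight by `𝐞_i` and by `-𝐞_{i+1}`, in
some order. For `e'_1̄` we have `ε'_1̄ ≤ 2`, so a squared step must pass through `ε'_1̄ = 2`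
and then `ε'_1̄ = 1`, shifting the weight by `𝐞_1 - 𝐞_2`. -/

section StringLength

variable {B : Type*} {g h : B → Option B} {a b c : B} {m m' : ℕ}

theorem iterOpt_add (g : B → Option B) (k l : ℕ) (a : B) :
    iterOpt g (k + l) a = (iterOpt g k a).bind (iterOpt g l) := by
  induction k generalizing a with
  | zero => simp [iterOpt]
  | succ k ih =>
    rw [Nat.add_right_comm, iterOpt, iterOpt, Option.bind_assoc]
    exact congrArg (g a).bind (funext ih)

theorem iterOpt_eq_none_of_le {k l : ℕ} (hk : iterOpt g k a = none) (hkl : k ≤ l) :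
    iterOpt g l a = none := by
  obtain ⟨d, rfl⟩ := Nat.exists_eq_add_of_le hkl
  rw [iterOpt_add, hk, Option.bind_none]

theorem sqOp_eq_some_iff : sqOp g b = some c ↔ ∃ b₁, g b = some b₁ ∧ g b₁ = some c :=
  Option.bind_eq_some_iff

theorem iterOpt_sqOp (g : B → Option B) (k : ℕ) (a : B) :
    iterOpt (sqOp g) k a = iterOpt g (2 * k) a := by
  induction k generalizing a with
  | zero => rfl
  | succ k ih =>
    have two_steps : iterOpt g 2 a = sqOp g a := by
      simp [iterOpt, sqOp]
    rw [show 2 * (k + 1) = 2 + 2 * k by ring, iterOpt_add g 2, two_steps, iterOpt]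
    exact congrArg (sqOp g a).bind (funext ih)

theorem HasStringLen.unique (h₁ : HasStringLen g a m) (h₂ : HasStringLen g a m') : m = m' := by
  by_contra hne
  rcases Nat.lt_or_gt_of_ne hne with hlt | hlt
  · exact h₂.1 (iterOpt_eq_none_of_le h₁.2 hlt)
  · exact h₁.1 (iterOpt_eq_none_of_le h₂.2 hlt)

theorem HasStringLen.sqOp (hm : HasStringLen g a m) : HasStringLen (sqOp g) a (m / 2) := by
  refine ⟨?_, ?_⟩ <;> rw [iterOpt_sqOp]
  · exact fun hnone => hm.1 (iterOpt_eq_none_of_le hnone (by omega))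
  · exact iterOpt_eq_none_of_le hm.2 (by omega)

theorem hasStringLen_succ_iff (hab : g a = some b) :
    HasStringLen g a (m + 1) ↔ HasStringLen g b m := by
  simp only [HasStringLen, iterOpt, hab, Option.bind_some]

theorem HasStringLen.exists_eq_succ (hm : HasStringLen g a m) (hab : g a = some b) :
    ∃ m₀, m = m₀ + 1 ∧ HasStringLen g b m₀ := by
  cases m with
  | zero => simp [HasStringLen, iterOpt, hab] at hm
  | succ m₀ => exact ⟨m₀, rfl, (hasStringLen_succ_iff hab).mp hm⟩

theorem hasStringLen_sqOp_congr (hbc : ∀ m, HasStringLen g b m ↔ HasStringLen g c m)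
    (hb : HasStringLen g b m) (m' : ℕ) :
    HasStringLen (sqOp g) b m' ↔ HasStringLen (sqOp g) c m' := by
  have hc := (hbc m).mp hb
  constructor
  · intro h'; exact h'.unique hb.sqOp ▸ hc.sqOp
  · intro h'; exact h'.unique hc.sqOp ▸ hb.sqOp

theorem sqOp_eq_some_iff_sqOp_eq_some (hgh : ∀ b c, g b = some c ↔ h c = some b) :
    sqOp g b = some c ↔ sqOp h c = some b := by
  simp only [sqOp_eq_some_iff]
  exact ⟨fun ⟨b₁, h₁, h₂⟩ => ⟨b₁, (hgh _ _).mp h₂, (hgh _ _).mp h₁⟩,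
    fun ⟨b₁, h₁, h₂⟩ => ⟨b₁, (hgh _ _).mpr h₂, (hgh _ _).mpr h₁⟩⟩

theorem sqOp_bind_comm (hgh : ∀ b, (g b).bind h = (h b).bind g) (b : B) :
    (sqOp g b).bind (sqOp h) = (sqOp h b).bind (sqOp g) := by
  have swap (o : Option B) : (o.bind g).bind h = (o.bind h).bind g := by
    simp only [Option.bind_assoc, hgh]
  have bind_sqOp (f : B → Option B) (o : Option B) : o.bind (sqOp f) = (o.bind f).bind f := by
    rw [Option.bind_assoc]; rfl
  show ((g b).bind g).bind (sqOp h) = ((h b).bind h).bind (sqOp g)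
  rw [bind_sqOp, bind_sqOp, swap (g b), swap ((g b).bind h), hgh b, swap (h b)]

end StringLength

section Crystal

variable {n i : ℕ} {B : Type*}

theorem IsSqGlCrystal.wt_sub_of_sqOp_eq_some {D : SqGlData B} (hD : IsSqGlCrystal n D)
    (hi : 1 ≤ i) (hin : i < n) {b c : B} (hbc : sqOp (D.e i) b = some c) (k : ℕ) :
    (D.wt c k : ℤ) - D.wt b k = (if k = i then 1 else 0) - (if k = i + 1 then 1 else 0) := by
  obtain ⟨b₁, hb, hb₁⟩ := sqOp_eq_some_iff.mp hbc
  obtain ⟨ep, -, hep, -⟩ := hD.1 i hi hin b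
  obtain ⟨m, rfl, hm⟩ := hep.exists_eq_succ hb
  have w₁ := hD.2.2 i hi hin b b₁ hb _ hep k
  have w₂ := hD.2.2 i hi hin b₁ c hb₁ _ hm k
  rcases Nat.even_or_odd m with hpar | hpar
  · simp only [hpar, Nat.even_add_one, not_true_eq_false, if_true, if_false] at w₁ w₂
    split_ifs at w₁ w₂ ⊢ <;> omega
  · simp only [Nat.not_even_iff_odd.mpr hpar, Nat.even_add_one, not_false_eq_true, if_true,
      if_false] at w₁ w₂
    split_ifs at w₁ w₂ ⊢ <;> omega

theorem IsSqGlCrystal.glSeminormalAxioms_sqOp {D : SqGlData B} (hD : IsSqGlCrystal n D) :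
    GlSeminormalAxioms n D.wt (fun i => sqOp (D.e i)) (fun i => sqOp (D.f i)) := by
  refine ⟨fun i hi hin b c => sqOp_eq_some_iff_sqOp_eq_some (hD.2.1 i hi hin),
    fun i hi hin b c hbc => hD.wt_sub_of_sqOp_eq_some hi hin hbc, fun i hi hin b => ?_⟩
  obtain ⟨ep, ph, hep, hph, heven, hdiff⟩ := hD.1 i hi hin b
  refine ⟨ep / 2, ph / 2, hep.sqOp, hph.sqOp, ?_⟩
  rw [Nat.even_iff] at heven
  omega

theorem IsSqQnCrystal.wt_sub_of_sqOp_ebar_eq_some {D : SqQData B} (hD : IsSqQnCrystal n D)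
    {b c : B} (hbc : sqOp D.ebar b = some c) (k : ℕ) :
    (D.wt c k : ℤ) - D.wt b k = (if k = 1 then 1 else 0) - (if k = 2 then 1 else 0) := by
  obtain ⟨b₁, hb, hb₁⟩ := sqOp_eq_some_iff.mp hbc
  obtain ⟨ep, ph, hep, -, hsum⟩ := hD.2.2.2.1 b
  obtain ⟨m, rfl, hm⟩ := hep.exists_eq_succ hb
  obtain ⟨m₀, rfl, -⟩ := hm.exists_eq_succ hb₁
  have hm₀ : m₀ = 0 := by split_ifs at hsum <;> omega
  subst hm₀
  have w₁ := hD.2.2.2.2.2 b b₁ hb _ hep k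
  have w₂ := hD.2.2.2.2.2 b₁ c hb₁ _ hm k
  simp only [Nat.reduceAdd, if_true, OfNat.one_ne_ofNat, if_false] at w₁ w₂
  split_ifs at w₁ w₂ ⊢ <;> omega

theorem IsSqQnCrystal.hasStringLen_sqOp_iff {D : SqQData B} (hD : IsSqQnCrystal n D)
    (hi : 3 ≤ i) (hin : i < n) {b c : B}
    (hbc : sqOp D.ebar b = some c ∨ sqOp D.fbar b = some c) :
    (∀ m, HasStringLen (sqOp (D.e i)) b m ↔ HasStringLen (sqOp (D.e i)) c m) ∧
      (∀ m, HasStringLen (sqOp (D.f i)) b m ↔ HasStringLen (sqOp (D.f i)) c m) := by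
  have hpres := hD.2.2.1 i hi hin
  have two_steps : (∀ m, HasStringLen (D.e i) b m ↔ HasStringLen (D.e i) c m) ∧
      (∀ m, HasStringLen (D.f i) b m ↔ HasStringLen (D.f i) c m) := by
    obtain ⟨b₁, h₁, h₂⟩ : ∃ b₁, (D.ebar b = some b₁ ∨ D.fbar b = some b₁) ∧
        (D.ebar b₁ = some c ∨ D.fbar b₁ = some c) := by
      rcases hbc with hbc | hbc <;> obtain ⟨b₁, h₁, h₂⟩ := sqOp_eq_some_iff.mp hbc
      exacts [⟨b₁, .inl h₁, .inl h₂⟩, ⟨b₁, .inr h₁, .inr h₂⟩]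
    obtain ⟨he₁, hf₁⟩ := hpres b b₁ h₁
    obtain ⟨he₂, hf₂⟩ := hpres b₁ c h₂
    exact ⟨fun m => (he₁ m).trans (he₂ m), fun m => (hf₁ m).trans (hf₂ m)⟩
  obtain ⟨ep, ph, hep, hph, -⟩ := hD.1.1 i (by omega) hin b
  exact ⟨hasStringLen_sqOp_congr two_steps.1 hep,
    hasStringLen_sqOp_congr two_steps.2 hph⟩

theorem IsSqQnCrystal.qnExtraAxioms_sqOp {D : SqQData B} (hD : IsSqQnCrystal n D) :
    QnExtraAxioms n D.wt (fun i => sqOp (D.e i)) (fun i => sqOp (D.f i))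
      (sqOp D.ebar) (sqOp D.fbar) := by
  refine ⟨fun i hi hin b => ?_, fun i hi hin b c => hD.hasStringLen_sqOp_iff hi hin,
    fun b c => sqOp_eq_some_iff_sqOp_eq_some hD.2.2.2.2.1,
    fun b c => hD.wt_sub_of_sqOp_ebar_eq_some⟩
  have hcomm := hD.2.1 i hi hin
  exact ⟨sqOp_bind_comm (fun b => (hcomm b).1) b, sqOp_bind_comm (fun b => (hcomm b).2.1) b,
    sqOp_bind_comm (fun b => (hcomm b).2.2.1) b, sqOp_bind_comm (fun b => (hcomm b).2.2.2) b⟩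

end Crystal

/-- Proposition 3.9 of the paper: every `√gl_n`-crystal is a
seminormal `gl_n`-crystal for the squared operators `(e'_i)²`, `(f'_i)²`, and every
`√q_n`-crystal is a `q_n`-crystal for the squared operators (including `(e'_1̄)²`,
`(f'_1̄)²`). -/
theorem stmt13 :
    (∀ (n : ℕ) (B : Type) (D : SqGlData B), IsSqGlCrystal n D →
      GlSeminormalAxioms n D.wt (fun i => sqOp (D.e i)) (fun i => sqOp (D.f i))) ∧
    (∀ (n : ℕ) (B : Type) (D : SqQData B), IsSqQnCrystal n D →
      GlSeminormalAxioms n D.wt (fun i => sqOp (D.e i)) (fun i => sqOp (D.f i)) ∧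
      QnExtraAxioms n D.wt (fun i => sqOp (D.e i)) (fun i => sqOp (D.f i))
        (sqOp D.ebar) (sqOp D.fbar)) :=
  ⟨fun _ _ _ hD => hD.glSeminormalAxioms_sqOp,
    fun _ _ _ hD => ⟨hD.1.glSeminormalAxioms_sqOp, hD.qnExtraAxioms_sqOp⟩⟩
end

section
/- For √gl_n-crystals B, C, D, the natural map B ⊗ (C ⊗ D) → (B ⊗ C) ⊗ D sending b ⊗ (c ⊗ d) to (b ⊗ c) ⊗ d is an isomorphism of √gl_n-crystals, i.e. a weight-preserving bijection Φ with Φ(e'_i(x)) = e'_i(Φ(x)) and Φ(f'_i(x)) = f'_i(Φ(x)) for all x and all i ∈ [n−1] (setting Φ(0) = 0); if B, C, D are √q_n-crystals then it is moreover an isomorphism of √q_n-crystals, commuting also with e'_1̄ and f'_1̄. -/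
open scoped Classical

/-
Everything rests on the string lengths of a tensor product,
`ε(b ⊗ c) = ε(c) + (ε(b) - φ(c))` and `φ(b ⊗ c) = φ(b) + (φ(c) - ε(b))` (truncated subtraction),
proved by walking along the string, which only needs `e'_i` and `f'_i` to be mutually inverse.
With these, which factor of `b ⊗ c ⊗ d` is moved by `e'_i` or `f'_i` is decided on both
bracketings by the same linear conditions on `ε, φ` of `b, c, d`. The operators `e'_1̄, f'_1̄`
act on the first factor whose weight is nonzero in coordinates `1, 2`, and weights add, so
they are associative outright.
-/

section StringLength

variable {α : Type*} {g : α → Option α} {a a' : α} {m : ℕ}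

theorem HasStringLen.zero_iff : HasStringLen g a 0 ↔ g a = none := by
  cases h : g a <;> simp [HasStringLen, iterOpt, h]

theorem HasStringLen.succ_iff_of_eq_some (h : g a = some a') :
    HasStringLen g a (m + 1) ↔ HasStringLen g a' m := by
  simp [HasStringLen, iterOpt, h]

theorem iterOpt_succ_eq_none (h : iterOpt g m a = none) : iterOpt g (m + 1) a = none := by
  induction m generalizing a with
  | zero => simp [iterOpt] at h
  | succ m ih =>
    cases hg : g a with
    | none => simp [iterOpt, hg]
    | some c => simp only [iterOpt, hg, Option.bind_some] at h ⊢; exact ih h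

theorem iterOpt_ne_none_of_le {j : ℕ} (hjm : j ≤ m) (h : iterOpt g m a ≠ none) :
    iterOpt g j a ≠ none := by
  induction hjm with
  | refl => exact h
  | step _ ih => exact ih fun hk => h (iterOpt_succ_eq_none hk)

theorem HasStringLen.strLen_eq (h : HasStringLen g a m) : strLen g a = m := by
  have hset : {k | iterOpt g k a ≠ none} = Set.Iic m := by
    ext k
    refine ⟨fun hk => Set.mem_Iic.mpr ?_, fun hk => iterOpt_ne_none_of_le hk h.1⟩
    by_contra hmk
    exact iterOpt_ne_none_of_le (not_le.mp hmk) hk h.2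
  rw [strLen, hset, csSup_Iic]

theorem HasStringLen.exists_eq_some (h : HasStringLen g a (m + 1)) :
    ∃ a', g a = some a' ∧ HasStringLen g a' m := by
  obtain ⟨a', ha'⟩ : ∃ a', g a = some a' := by
    simpa [HasStringLen, iterOpt, Option.ne_none_iff_exists'] using
      iterOpt_ne_none_of_le (Nat.succ_le_succ (Nat.zero_le m)) h.1
  exact ⟨a', ha', (succ_iff_of_eq_some ha').mp h⟩

end StringLength

section TensorGl

variable {B C D : Type*} {DB : SqGlData B} {DC : SqGlData C} {DD : SqGlData D} {i : ℕ}

theorem tensorGl_e_mk (b : B) (c : C) :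
    (tensorGl DB DC).e i (b, c) = if strLen (DB.e i) b ≤ strLen (DC.f i) c
      then (DC.e i c).map (b, ·) else (DB.e i b).map (·, c) := rfl

theorem tensorGl_f_mk (b : B) (c : C) :
    (tensorGl DB DC).f i (b, c) = if strLen (DB.e i) b < strLen (DC.f i) c
      then (DC.f i c).map (b, ·) else (DB.f i b).map (·, c) := rfl

theorem hasStringLen_tensorGl_e (hC : ∀ c c', DC.e i c = some c' ↔ DC.f i c' = some c)
    {b : B} {c : C} {eb ec fc : ℕ} (heb : HasStringLen (DB.e i) b eb)
    (hec : HasStringLen (DC.e i) c ec) (hfc : HasStringLen (DC.f i) c fc) :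
    HasStringLen ((tensorGl DB DC).e i) (b, c) (ec + (eb - fc)) := by
  have hstep := tensorGl_e_mk (DB := DB) (DC := DC) (i := i) b c
  rw [heb.strLen_eq, hfc.strLen_eq] at hstep
  rcases le_or_gt eb fc with hle | hlt
  · rcases Nat.eq_zero_or_pos ec with rfl | hec0
    · rw [HasStringLen.zero_iff.mp hec, if_pos hle] at hstep
      simpa [Nat.sub_eq_zero_of_le hle, HasStringLen.zero_iff] using hstep
    · obtain ⟨ec, rfl⟩ : ∃ ec', ec = ec' + 1 := ⟨ec - 1, by omega⟩
      obtain ⟨c', hc', hec'⟩ := hec.exists_eq_some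
      have hfc' := (HasStringLen.succ_iff_of_eq_some ((hC c c').mp hc')).mpr hfc
      rw [hc', if_pos hle] at hstep
      have ih := hasStringLen_tensorGl_e hC heb hec' hfc'
      rw [show ec + 1 + (eb - fc) = ec + (eb - (fc + 1)) + 1 by omega]
      exact (HasStringLen.succ_iff_of_eq_some hstep).mpr ih
  · obtain ⟨eb, rfl⟩ : ∃ eb', eb = eb' + 1 := ⟨eb - 1, by omega⟩
    obtain ⟨b', hb', heb'⟩ := heb.exists_eq_some
    rw [hb', if_neg (by omega)] at hstep
    have ih := hasStringLen_tensorGl_e hC heb' hec hfc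
    rw [show ec + (eb + 1 - fc) = ec + (eb - fc) + 1 by omega]
    exact (HasStringLen.succ_iff_of_eq_some hstep).mpr ih
termination_by eb + ec

theorem hasStringLen_tensorGl_f (hB : ∀ b b', DB.e i b = some b' ↔ DB.f i b' = some b)
    {b : B} {c : C} {eb fb fc : ℕ} (heb : HasStringLen (DB.e i) b eb)
    (hfb : HasStringLen (DB.f i) b fb) (hfc : HasStringLen (DC.f i) c fc) :
    HasStringLen ((tensorGl DB DC).f i) (b, c) (fb + (fc - eb)) := by
  have hstep := tensorGl_f_mk (DB := DB) (DC := DC) (i := i) b c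
  rw [heb.strLen_eq, hfc.strLen_eq] at hstep
  rcases lt_or_ge eb fc with hlt | hge
  · obtain ⟨fc, rfl⟩ : ∃ fc', fc = fc' + 1 := ⟨fc - 1, by omega⟩
    obtain ⟨c', hc', hfc'⟩ := hfc.exists_eq_some
    rw [hc', if_pos hlt] at hstep
    have ih := hasStringLen_tensorGl_f hB heb hfb hfc'
    rw [show fb + (fc + 1 - eb) = fb + (fc - eb) + 1 by omega]
    exact (HasStringLen.succ_iff_of_eq_some hstep).mpr ih
  · rcases Nat.eq_zero_or_pos fb with rfl | hfb0
    · rw [HasStringLen.zero_iff.mp hfb, if_neg (by omega)] at hstep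
      simpa [Nat.sub_eq_zero_of_le hge, HasStringLen.zero_iff] using hstep
    · obtain ⟨fb, rfl⟩ : ∃ fb', fb = fb' + 1 := ⟨fb - 1, by omega⟩
      obtain ⟨b', hb', hfb'⟩ := hfb.exists_eq_some
      have heb' := (HasStringLen.succ_iff_of_eq_some ((hB b' b).mpr hb')).mpr heb
      rw [hb', if_neg (by omega)] at hstep
      have ih := hasStringLen_tensorGl_f hB heb' hfb' hfc
      rw [show fb + 1 + (fc - eb) = fb + (fc - (eb + 1)) + 1 by omega]
      exact (HasStringLen.succ_iff_of_eq_some hstep).mpr ih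
termination_by fb + fc

theorem tensorGl_e_assoc (b : B) (c : C) (d : D)
    (hBC : strLen ((tensorGl DB DC).e i) (b, c) =
      strLen (DC.e i) c + (strLen (DB.e i) b - strLen (DC.f i) c))
    (hCD : strLen ((tensorGl DC DD).f i) (c, d) =
      strLen (DC.f i) c + (strLen (DD.f i) d - strLen (DC.e i) c)) :
    ((tensorGl DB (tensorGl DC DD)).e i (b, (c, d))).map (Equiv.prodAssoc B C D).symm =
      (tensorGl (tensorGl DB DC) DD).e i ((b, c), d) := by
  simp only [tensorGl_e_mk, hBC, hCD]
  split_ifs <;> first | omega | simp only [Option.map_map]; rfl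

theorem tensorGl_f_assoc (b : B) (c : C) (d : D)
    (hBC : strLen ((tensorGl DB DC).e i) (b, c) =
      strLen (DC.e i) c + (strLen (DB.e i) b - strLen (DC.f i) c))
    (hCD : strLen ((tensorGl DC DD).f i) (c, d) =
      strLen (DC.f i) c + (strLen (DD.f i) d - strLen (DC.e i) c)) :
    ((tensorGl DB (tensorGl DC DD)).f i (b, (c, d))).map (Equiv.prodAssoc B C D).symm =
      (tensorGl (tensorGl DB DC) DD).f i ((b, c), d) := by
  simp only [tensorGl_f_mk, hBC, hCD]
  split_ifs <;> first | omega | simp only [Option.map_map]; rfl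

theorem IsSqGlCrystal.tensorGl_assoc {n : ℕ} (hB : IsSqGlCrystal n DB)
    (hC : IsSqGlCrystal n DC) (hD : IsSqGlCrystal n DD) (hi : 1 ≤ i) (hin : i < n)
    (b : B) (c : C) (d : D) :
    ((tensorGl DB (tensorGl DC DD)).e i (b, (c, d))).map (Equiv.prodAssoc B C D).symm =
      (tensorGl (tensorGl DB DC) DD).e i ((b, c), d) ∧
    ((tensorGl DB (tensorGl DC DD)).f i (b, (c, d))).map (Equiv.prodAssoc B C D).symm =
      (tensorGl (tensorGl DB DC) DD).f i ((b, c), d) := by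
  obtain ⟨eb, -, heb, -⟩ := hB.1 i hi hin b
  obtain ⟨ec, fc, hec, hfc, -⟩ := hC.1 i hi hin c
  obtain ⟨-, fd, -, hfd, -⟩ := hD.1 i hi hin d
  have hBC : strLen ((tensorGl DB DC).e i) (b, c) =
      strLen (DC.e i) c + (strLen (DB.e i) b - strLen (DC.f i) c) := by
    rw [(hasStringLen_tensorGl_e (hC.2.1 i hi hin) heb hec hfc).strLen_eq,
      heb.strLen_eq, hec.strLen_eq, hfc.strLen_eq]
  have hCD : strLen ((tensorGl DC DD).f i) (c, d) =
      strLen (DC.f i) c + (strLen (DD.f i) d - strLen (DC.e i) c) := by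
    rw [(hasStringLen_tensorGl_f (hC.2.1 i hi hin) hec hfc hfd).strLen_eq,
      hec.strLen_eq, hfc.strLen_eq, hfd.strLen_eq]
  exact ⟨tensorGl_e_assoc b c d hBC hCD, tensorGl_f_assoc b c d hBC hCD⟩

theorem tensorQ_ebar_fbar_assoc {DB : SqQData B} {DC : SqQData C} {DD : SqQData D}
    (b : B) (c : C) (d : D) :
    ((tensorQ DB (tensorQ DC DD)).ebar (b, (c, d))).map (Equiv.prodAssoc B C D).symm =
      (tensorQ (tensorQ DB DC) DD).ebar ((b, c), d) ∧
    ((tensorQ DB (tensorQ DC DD)).fbar (b, (c, d))).map (Equiv.prodAssoc B C D).symm =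
      (tensorQ (tensorQ DB DC) DD).fbar ((b, c), d) := by
  constructor <;>
  · simp only [tensorQ, tensorGl]
    split_ifs <;> first | omega | simp only [Option.map_map]; rfl

end TensorGl

/-- associativity: the natural map
`B ⊗ (C ⊗ D) → (B ⊗ C) ⊗ D`, `b ⊗ (c ⊗ d) ↦ (b ⊗ c) ⊗ d`, is an isomorphism of
`√gl_n`-crystals, and of `√q_n`-crystals in the queer case. -/
theorem stmt18 {B C D : Type*} (n : ℕ) :
    (∀ (DB : SqGlData B) (DC : SqGlData C) (DD : SqGlData D),
      IsSqGlCrystal n DB → IsSqGlCrystal n DC → IsSqGlCrystal n DD →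
      let Φ : B × (C × D) → (B × C) × D := fun x => ((x.1, x.2.1), x.2.2)
      let L := tensorGl DB (tensorGl DC DD)
      let R := tensorGl (tensorGl DB DC) DD
      Function.Bijective Φ ∧
      (∀ x k, R.wt (Φ x) k = L.wt x k) ∧
      (∀ i, 1 ≤ i → i < n → ∀ x,
        (L.e i x).map Φ = R.e i (Φ x) ∧ (L.f i x).map Φ = R.f i (Φ x))) ∧
    (∀ (DB : SqQData B) (DC : SqQData C) (DD : SqQData D),
      IsSqQnCrystal n DB → IsSqQnCrystal n DC → IsSqQnCrystal n DD →
      let Φ : B × (C × D) → (B × C) × D := fun x => ((x.1, x.2.1), x.2.2)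
      let L := tensorQ DB (tensorQ DC DD)
      let R := tensorQ (tensorQ DB DC) DD
      Function.Bijective Φ ∧
      (∀ x k, L.wt x k = R.wt (Φ x) k) ∧
      (∀ i, 1 ≤ i → i < n → ∀ x,
        (L.e i x).map Φ = R.e i (Φ x) ∧ (L.f i x).map Φ = R.f i (Φ x)) ∧
      (∀ x, (L.ebar x).map Φ = R.ebar (Φ x) ∧ (L.fbar x).map Φ = R.fbar (Φ x))) :=
  ⟨fun _ _ _ hB hC hD => ⟨(Equiv.prodAssoc B C D).symm.bijective,
      fun _ _ => add_assoc _ _ _,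
      fun _ hi hin x => hB.tensorGl_assoc hC hD hi hin x.1 x.2.1 x.2.2⟩,
    fun _ _ _ hB hC hD => ⟨(Equiv.prodAssoc B C D).symm.bijective,
      fun _ _ => (add_assoc _ _ _).symm,
      fun _ hi hin x => hB.1.tensorGl_assoc hC.1 hD.1 hi hin x.1 x.2.1 x.2.2,
      fun x => tensorQ_ebar_fbar_assoc x.1 x.2.1 x.2.2⟩⟩
end
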